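/- arXiv:1806.02166 — 5 statements merged into one kernel-verified Lean document; each statement's English description precedes it below -/
import Mathlib

section
/- Let n ≥ 1 and let f : ℝⁿ → ℝ be a C¹ convex function. Suppose there is a point x₀ ∈ ℝⁿ with ∇f(x₀) = 0 and that f is strictly convex on some open ball centered at x₀. Then f(x) tends to +∞ as ‖x‖ → ∞ (i.e., f tends to +∞ along the cocompact filter on ℝⁿ). -/
open scoped RealInnerProductSpace

/-- A C¹ convex function on ℝⁿ with a critical point `x₀` near which it is
strictly convex tends to `+∞` along the cocompact filter (i.e. as `‖x‖ → ∞`). -/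
theorem stmt_0 (n : ℕ) (hn : 1 ≤ n)
    (f : EuclideanSpace ℝ (Fin n) → ℝ)
    (hf : ContDiff ℝ 1 f)
    (hconv : ConvexOn ℝ Set.univ f)
    (x₀ : EuclideanSpace ℝ (Fin n))
    (hcrit : gradient f x₀ = 0)
    (r : ℝ) (hr : 0 < r)
    (hstrict : StrictConvexOn ℝ (Metric.ball x₀ r) f) :
    Filter.Tendsto f (Filter.cocompact (EuclideanSpace ℝ (Fin n))) Filter.atTop := by
  have hdiff : Differentiable ℝ f := hf.differentiable one_ne_zero
  have hcont : Continuous f := hf.continuous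
  -- fderiv at x₀ is zero
  have hfderiv : fderiv ℝ f x₀ = 0 := by
    have : (InnerProductSpace.toDual ℝ (EuclideanSpace ℝ (Fin n))).symm (fderiv ℝ f x₀) = 0 := hcrit
    have h2 := congrArg (InnerProductSpace.toDual ℝ (EuclideanSpace ℝ (Fin n))) this
    simpa using h2
  -- along any line, f is convex
  have hline : ∀ x : EuclideanSpace ℝ (Fin n), ConvexOn ℝ Set.univ (f ∘ (AffineMap.lineMap x₀ x : ℝ →ᵃ[ℝ] EuclideanSpace ℝ (Fin n))) := by
    intro x
    have := hconv.comp_affineMap (AffineMap.lineMap x₀ x : ℝ →ᵃ[ℝ] EuclideanSpace ℝ (Fin n))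
    simpa using this
  have hlm : ∀ (x : EuclideanSpace ℝ (Fin n)) (t : ℝ),
      (AffineMap.lineMap x₀ x : ℝ →ᵃ[ℝ] EuclideanSpace ℝ (Fin n)) t = x₀ + t • (x - x₀) := by
    intro x t
    simp [AffineMap.lineMap_apply]
    abel
  -- Step A: x₀ is a global minimum
  have hmin : ∀ x : EuclideanSpace ℝ (Fin n), f x₀ ≤ f x := by
    intro x
    have hderivline : HasDerivAt (fun t : ℝ => (AffineMap.lineMap x₀ x : ℝ →ᵃ[ℝ] EuclideanSpace ℝ (Fin n)) t)
        (x - x₀) 0 := by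
      have h1 : HasDerivAt (fun t : ℝ => x₀ + t • (x - x₀)) (x - x₀) 0 := by
        simpa using ((hasDerivAt_id (0:ℝ)).smul_const (x - x₀)).const_add x₀
      exact h1.congr_of_eventuallyEq (Filter.Eventually.of_forall fun t => hlm x t)
    have hF : HasFDerivAt f (0 : EuclideanSpace ℝ (Fin n) →L[ℝ] ℝ) x₀ := hfderiv ▸ (hdiff x₀).hasFDerivAt
    have hg0 : HasDerivAt (f ∘ (AffineMap.lineMap x₀ x : ℝ →ᵃ[ℝ] EuclideanSpace ℝ (Fin n))) 0 0 := by
      have hF' : HasFDerivAt f (0 : EuclideanSpace ℝ (Fin n) →L[ℝ] ℝ)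
          ((AffineMap.lineMap x₀ x : ℝ →ᵃ[ℝ] EuclideanSpace ℝ (Fin n)) 0) := by
        rw [show ((AffineMap.lineMap x₀ x : ℝ →ᵃ[ℝ] EuclideanSpace ℝ (Fin n)) 0) = x₀ by
          simp [hlm x 0]]
        exact hF
      have := hF'.comp_hasDerivAt (0:ℝ) hderivline
      simpa using this
    have := (hline x).le_slope_of_hasDerivAt (Set.mem_univ 0) (Set.mem_univ 1)
      zero_lt_one hg0
    have hs : slope (f ∘ (AffineMap.lineMap x₀ x : ℝ →ᵃ[ℝ] EuclideanSpace ℝ (Fin n))) 0 1 = f x - f x₀ := by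
      simp [slope_def_field, Function.comp, hlm x 0, hlm x 1]
    rw [hs] at this
    linarith
  -- Step B: min of f on the sphere of radius r/2 exceeds f x₀
  set s : ℝ := r / 2 with hs_def
  have hs0 : 0 < s := by positivity
  haveI : Nonempty (Fin n) := ⟨⟨0, hn⟩⟩
  have hsphne : (Metric.sphere x₀ s).Nonempty :=
    NormedSpace.sphere_nonempty.2 hs0.le
  obtain ⟨y₀, hy₀mem, hy₀min⟩ :=
    (isCompact_sphere x₀ s).exists_isMinOn hsphne hcont.continuousOn
  set m : ℝ := f y₀ - f x₀ with hm_def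
  have hy₀dist : dist y₀ x₀ = s := hy₀mem
  have hy₀ne : y₀ ≠ x₀ := by
    intro h; rw [h, dist_self] at hy₀dist; exact hs0.ne' hy₀dist.symm
  have hm0 : 0 < m := by
    have hy₀ball : y₀ ∈ Metric.ball x₀ r := by
      simp only [Metric.mem_ball, hy₀dist]; linarith
    have hx₀ball : x₀ ∈ Metric.ball x₀ r := Metric.mem_ball_self hr
    have hmid := hstrict.2 hx₀ball hy₀ball (Ne.symm hy₀ne)
      (by norm_num : (0:ℝ) < 1/2) (by norm_num : (0:ℝ) < 1/2) (by norm_num)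
    rw [smul_eq_mul, smul_eq_mul] at hmid
    have := hmin ((1/2 : ℝ) • x₀ + (1/2 : ℝ) • y₀)
    simp only [hm_def]
    linarith
  -- Step C: growth estimate and conclusion
  have key : ∀ x : EuclideanSpace ℝ (Fin n), s ≤ ‖x - x₀‖ → f x₀ + (m / s) * ‖x - x₀‖ ≤ f x := by
    intro x hx
    set d : ℝ := ‖x - x₀‖ with hd_def
    have hd0 : 0 < d := lt_of_lt_of_le hs0 hx
    have htpos : 0 < s / d := div_pos hs0 hd0
    have ht1 : s / d ≤ 1 := (div_le_one hd0).2 hx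
    set g := f ∘ (AffineMap.lineMap x₀ x : ℝ →ᵃ[ℝ] EuclideanSpace ℝ (Fin n)) with hg_def
    have hmono := (hline x).slope_mono (Set.mem_univ 0)
      (show (s/d) ∈ Set.univ \ {0} by simp [htpos.ne'])
      (show (1:ℝ) ∈ Set.univ \ {0} by simp) ht1
    have hslope1 : slope g 0 1 = f x - f x₀ := by
      simp [hg_def, slope_def_field, Function.comp, hlm x 0, hlm x 1]
    have hslopet : slope g 0 (s/d) = (f (x₀ + (s/d) • (x - x₀)) - f x₀) / (s/d) := by
      simp [hg_def, slope_def_field, Function.comp, hlm x (s/d), hlm x 0]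
    -- the point x₀ + (s/d) • (x - x₀) lies on the sphere of radius s
    have hsph : x₀ + (s/d) • (x - x₀) ∈ Metric.sphere x₀ s := by
      simp only [Metric.mem_sphere, dist_eq_norm]
      rw [add_sub_cancel_left, norm_smul]
      simp only [Real.norm_eq_abs, abs_of_pos htpos]
      field_simp
      exact hd_def.symm
    have hfy : f x₀ + m ≤ f (x₀ + (s/d) • (x - x₀)) := by
      have h : f y₀ ≤ f (x₀ + (s/d) • (x - x₀)) := hy₀min hsph
      simp only [hm_def]
      linarith
    rw [hslopet, hslope1] at hmono
    have h1 : m / (s/d) ≤ (f (x₀ + (s/d) • (x - x₀)) - f x₀) / (s/d) := by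
      gcongr
      linarith
    have h2 : m / (s/d) ≤ f x - f x₀ := le_trans h1 hmono
    have h3 : m / (s/d) = (m / s) * d := by field_simp
    linarith [h3 ▸ h2]
  -- conclude
  have haux : Filter.Tendsto (fun x : EuclideanSpace ℝ (Fin n) => f x₀ + (m / s) * (‖x‖ - ‖x₀‖))
      (Filter.cocompact (EuclideanSpace ℝ (Fin n))) Filter.atTop := by
    apply Filter.tendsto_atTop_add_const_left
    apply Filter.Tendsto.const_mul_atTop (div_pos hm0 hs0)
    exact Filter.tendsto_atTop_add_const_right _ _ tendsto_norm_cocompact_atTop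
  apply Filter.tendsto_atTop_mono' _ _ haux
  have hcc : (Metric.closedBall x₀ s)ᶜ ∈ Filter.cocompact (EuclideanSpace ℝ (Fin n)) :=
    (Filter.hasBasis_cocompact.mem_iff).2
      ⟨Metric.closedBall x₀ s, isCompact_closedBall x₀ s, le_rfl⟩
  filter_upwards [hcc] with x hx
  have hxs : s ≤ ‖x - x₀‖ := by
    simp only [Set.mem_compl_iff, Metric.mem_closedBall, not_le, dist_eq_norm] at hx
    exact hx.le
  have h1 := key x hxs
  have h2 : ‖x‖ - ‖x₀‖ ≤ ‖x - x₀‖ := by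
    have := norm_sub_norm_le x x₀; linarith
  have h3 : (m / s) * (‖x‖ - ‖x₀‖) ≤ (m / s) * ‖x - x₀‖ :=
    mul_le_mul_of_nonneg_left h2 (div_pos hm0 hs0).le
  linarith
end

section
/- Let n ≥ 1 and let f : ℝⁿ → ℝ be a C¹ convex function. Suppose there is a point x₀ ∈ ℝⁿ with ∇f(x₀) = 0 and that f is strictly convex on some open ball centered at x₀. Then x₀ is the unique global minimizer of f, and for every c ∈ ℝ the sublevel set {x ∈ ℝⁿ : f(x) ≤ c} is compact. -/
open scoped RealInnerProductSpace

private lemma stmt1_aux_min (n : ℕ) (f : EuclideanSpace ℝ (Fin n) → ℝ)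
    (hf : ContDiff ℝ 1 f) (hconv : ConvexOn ℝ Set.univ f)
    (x₀ : EuclideanSpace ℝ (Fin n)) (hcrit : gradient f x₀ = 0)
    (x : EuclideanSpace ℝ (Fin n)) : f x₀ ≤ f x := by
  have hfderiv : fderiv ℝ f x₀ = 0 := by
    have := congrArg (InnerProductSpace.toDual ℝ (EuclideanSpace ℝ (Fin n))) hcrit
    simpa [gradient] using this
  set v := x - x₀ with hv
  set g : ℝ → ℝ := fun t => f (x₀ + t • v) with hg
  have hgconv : ConvexOn ℝ Set.univ g := by
    have h1 : g = f ∘ (AffineMap.lineMap x₀ x) := by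
      funext t
      simp [hg, AffineMap.lineMap_apply, hv, Function.comp, add_comm]
    rw [h1]
    simpa using hconv.comp_affineMap (AffineMap.lineMap x₀ x)
  have hline : HasDerivAt (fun t : ℝ => x₀ + t • v) v 0 := by
    simpa using ((hasDerivAt_id (0:ℝ)).smul_const v).const_add x₀
  have hfd : HasFDerivAt f (fderiv ℝ f x₀) (x₀ + (0:ℝ) • v) := by
    simpa using ((hf.differentiable one_ne_zero) x₀).hasFDerivAt
  have hg0 : HasDerivAt g 0 0 := by
    have := hfd.comp_hasDerivAt (0:ℝ) hline
    simp [hfderiv] at this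
    exact this
  have hs : (0:ℝ) ≤ slope g 0 1 :=
    ConvexOn.le_slope_of_hasDerivAt hgconv trivial trivial one_pos hg0
  have : g 0 ≤ g 1 := by
    rw [slope_def_field] at hs
    simp at hs
    linarith [hs]
  simpa [hg, hv] using this

/-- A C¹ convex function on ℝⁿ with a critical point `x₀` near which it is
strictly convex has `x₀` as its unique global minimizer and has compact sublevel sets. -/
theorem stmt_1 (n : ℕ) (hn : 1 ≤ n)
    (f : EuclideanSpace ℝ (Fin n) → ℝ)
    (hf : ContDiff ℝ 1 f)
    (hconv : ConvexOn ℝ Set.univ f)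
    (x₀ : EuclideanSpace ℝ (Fin n))
    (hcrit : gradient f x₀ = 0)
    (r : ℝ) (hr : 0 < r)
    (hstrict : StrictConvexOn ℝ (Metric.ball x₀ r) f) :
    (∀ x : EuclideanSpace ℝ (Fin n), x ≠ x₀ → f x₀ < f x) ∧
      ∀ c : ℝ, IsCompact {x : EuclideanSpace ℝ (Fin n) | f x ≤ c} := by
  have hmin : ∀ x, f x₀ ≤ f x := stmt1_aux_min n f hf hconv x₀ hcrit
  have hsm : ∀ x : EuclideanSpace ℝ (Fin n), x ≠ x₀ → f x₀ < f x := by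
    intro x hx
    rcases lt_or_eq_of_le (hmin x) with h | h
    · exact h
    exfalso
    set v := x - x₀ with hv
    have hvne : v ≠ 0 := sub_ne_zero.mpr hx
    have hnv : 0 < ‖v‖ := norm_pos_iff.mpr hvne
    set s : ℝ := min 1 (r / (2 * ‖v‖)) with hsdef
    have hs0 : 0 < s := lt_min one_pos (by positivity)
    have hs1 : s ≤ 1 := min_le_left _ _
    set b := x₀ + s • v with hb
    have hcombo : (1 - s) • x₀ + s • x = b := by
      rw [hb, hv]; module
    have hfb_le : f b ≤ f x₀ := by
      have h2 := hconv.2 (Set.mem_univ x₀) (Set.mem_univ x)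
        (by linarith : (0:ℝ) ≤ 1 - s) hs0.le (by ring)
      rw [hcombo] at h2
      simp only [smul_eq_mul] at h2
      rw [← h] at h2
      linarith
    have hfb : f b = f x₀ := le_antisymm hfb_le (hmin b)
    have hx₀mem : x₀ ∈ Metric.ball x₀ r := Metric.mem_ball_self hr
    have hbmem : b ∈ Metric.ball x₀ r := by
      rw [Metric.mem_ball, dist_eq_norm, hb]
      have h3 : ‖x₀ + s • v - x₀‖ = s * ‖v‖ := by
        simp [norm_smul, abs_of_pos hs0]
      rw [h3]
      have h4 : s ≤ r / (2 * ‖v‖) := min_le_right _ _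
      have h5 : s * ‖v‖ ≤ r / 2 := by
        rw [div_mul_eq_div_div] at h4
        calc s * ‖v‖ ≤ (r / 2 / ‖v‖) * ‖v‖ := by nlinarith
          _ = r / 2 := by field_simp
      linarith
    have hbne : x₀ ≠ b := by
      rw [hb]
      intro hcontra
      have : s • v = 0 := by
        have := congrArg (fun z => z - x₀) hcontra
        simpa using this.symm
      exact hvne (by simpa [smul_eq_zero, hs0.ne'] using this)
    have hmid := hstrict.2 hx₀mem hbmem hbne (by norm_num : (0:ℝ) < 1/2)
      (by norm_num : (0:ℝ) < 1/2) (by norm_num)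
    have hge := hmin ((1/2 : ℝ) • x₀ + (1/2 : ℝ) • b)
    simp only [smul_eq_mul] at hmid
    rw [hfb] at hmid
    linarith
  refine ⟨hsm, ?_⟩
  intro c
  have hcont : Continuous f := hf.continuous
  have hclosed : IsClosed {x : EuclideanSpace ℝ (Fin n) | f x ≤ c} :=
    isClosed_le hcont continuous_const
  haveI : Nonempty (Fin n) := ⟨⟨0, hn⟩⟩
  have hsne : (Metric.sphere x₀ (r/2)).Nonempty :=
    NormedSpace.sphere_nonempty.mpr (by positivity)
  obtain ⟨y₀, hy₀, hy₀min⟩ :=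
    (isCompact_sphere x₀ (r/2)).exists_isMinOn hsne hcont.continuousOn
  set m := f y₀ with hm
  have hy₀ne : y₀ ≠ x₀ := by
    intro hcontra
    rw [Metric.mem_sphere, hcontra, dist_self] at hy₀
    linarith
  have hmgt : f x₀ < m := hsm y₀ hy₀ne
  set R := max (r/2) ((r/2) * (c - f x₀) / (m - f x₀)) with hR
  have hsub : {x : EuclideanSpace ℝ (Fin n) | f x ≤ c} ⊆ Metric.closedBall x₀ R := by
    intro x hx
    simp only [Set.mem_setOf_eq] at hx
    rw [Metric.mem_closedBall]
    by_cases hd : dist x x₀ ≤ r/2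
    · exact le_trans hd (le_max_left _ _)
    push_neg at hd
    set d := dist x x₀ with hdd
    have hd0 : 0 < d := lt_trans (by positivity) hd
    set t := (r/2)/d with ht
    have ht0 : 0 < t := by positivity
    have ht1 : t ≤ 1 := (div_le_one hd0).mpr hd.le
    set y := x₀ + t • (x - x₀) with hy
    have hysph : y ∈ Metric.sphere x₀ (r/2) := by
      rw [Metric.mem_sphere, dist_eq_norm, hy]
      have h3 : ‖x₀ + t • (x - x₀) - x₀‖ = t * ‖x - x₀‖ := by
        simp [norm_smul, abs_of_pos ht0]
      rw [h3, ← dist_eq_norm, ← hdd, ht]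
      field_simp
    have hfy : m ≤ f y := hy₀min hysph
    have hcombo : (1 - t) • x₀ + t • x = y := by rw [hy]; module
    have hcomb : f y ≤ (1 - t) * f x₀ + t * f x := by
      have h2 := hconv.2 (Set.mem_univ x₀) (Set.mem_univ x)
        (by linarith : (0:ℝ) ≤ 1 - t) ht0.le (by ring)
      rw [hcombo] at h2
      simpa [smul_eq_mul] using h2
    have h1 : m - f x₀ ≤ t * (c - f x₀) := by nlinarith
    have hdt : d * t = r/2 := by rw [ht]; field_simp
    have hdle : d ≤ (r/2) * (c - f x₀) / (m - f x₀) := by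
      rw [le_div_iff₀ (by linarith)]
      nlinarith
    exact le_trans hdle (le_max_right _ _)
  exact (isCompact_closedBall x₀ R).of_isClosed_subset hclosed hsub
end

section
/- Let n ≥ 1 and μ > 0. Let A : [0,∞) → Matₙ(ℝ) assign to each t a symmetric matrix A(t) with A(t)·𝟙 = 0 and ⟨A(t)w, w⟩ ≥ μ‖w‖² for every w ∈ ℝⁿ with ⟨w,𝟙⟩ = 0. Let v : [0,∞) → ℝⁿ be differentiable with v′(t) = -A(t)²·v(t) for all t ≥ 0 and ⟨v(0), 𝟙⟩ = 0. Then ⟨v(t), 𝟙⟩ = 0 for all t ≥ 0 and ‖v(t)‖ ≤ e^{-μ² t}·‖v(0)‖ for all t ≥ 0. -/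
open scoped RealInnerProductSpace

/-- The all-ones vector `𝟙 = (1, …, 1)` in Euclidean `n`-space. -/
def allOnes (n : ℕ) : EuclideanSpace ℝ (Fin n) := WithLp.toLp 2 (fun _ => 1)

/-- Suppose `A(t)` is a symmetric matrix with `A(t) 𝟙 = 0` and
`⟨A(t) w, w⟩ ≥ μ ‖w‖²` for all `w ⊥ 𝟙`, for every `t ≥ 0`.  If `v' = -A(t)² v` and
`v(0) ⊥ 𝟙`, then `v(t) ⊥ 𝟙` and `‖v(t)‖ ≤ e^{-μ² t} ‖v(0)‖` for all `t ≥ 0`. -/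
theorem stmt_9 (n : ℕ) (hn : 1 ≤ n) (μ : ℝ) (hμ : 0 < μ)
    (A : ℝ → Matrix (Fin n) (Fin n) ℝ)
    (hsymm : ∀ t : ℝ, 0 ≤ t → (A t).IsSymm)
    (hker : ∀ t : ℝ, 0 ≤ t → Matrix.toEuclideanLin (A t) (allOnes n) = 0)
    (hpos : ∀ t : ℝ, 0 ≤ t → ∀ w : EuclideanSpace ℝ (Fin n), ⟪w, allOnes n⟫ = 0 →
      μ * ‖w‖ ^ 2 ≤ ⟪Matrix.toEuclideanLin (A t) w, w⟫)
    (v : ℝ → EuclideanSpace ℝ (Fin n))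
    (hv : ∀ t : ℝ, 0 ≤ t → HasDerivAt v
      (-(Matrix.toEuclideanLin (A t) (Matrix.toEuclideanLin (A t) (v t)))) t)
    (hv0 : ⟪v 0, allOnes n⟫ = 0) :
    ∀ t : ℝ, 0 ≤ t → ⟪v t, allOnes n⟫ = 0 ∧
      ‖v t‖ ≤ Real.exp (-(μ ^ 2) * t) * ‖v 0‖ := by
  set L : ℝ → EuclideanSpace ℝ (Fin n) →ₗ[ℝ] EuclideanSpace ℝ (Fin n) :=
    fun t => Matrix.toEuclideanLin (A t) with hL
  -- symmetry of L t
  have hLsym : ∀ t : ℝ, 0 ≤ t → ∀ x y : EuclideanSpace ℝ (Fin n),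
      ⟪L t x, y⟫ = ⟪x, L t y⟫ := by
    intro t ht x y
    have hherm : (A t).IsHermitian := by
      rw [Matrix.IsHermitian, Matrix.conjTranspose_eq_transpose_of_trivial]
      exact hsymm t ht
    exact (Matrix.isHermitian_iff_isSymmetric.1 hherm) x y
  -- Part 1: orthogonality propagates
  have horth : ∀ t : ℝ, 0 ≤ t → ⟪v t, allOnes n⟫ = 0 := by
    intro T hT
    have key : ∀ x ∈ Set.Icc (0:ℝ) T,
        (fun s => ⟪v s, allOnes n⟫) x = (fun s => ⟪v s, allOnes n⟫) 0 := by
      apply constant_of_has_deriv_right_zero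
      · intro x hx
        exact (((hv x hx.1).inner ℝ (hasDerivAt_const x (allOnes n))).continuousAt).continuousWithinAt
      · intro x hx
        have hx0 : (0:ℝ) ≤ x := hx.1
        have hd := (hv x hx0).inner ℝ (hasDerivAt_const x (allOnes n))
        have hval : ⟪v x, (0:EuclideanSpace ℝ (Fin n))⟫
            + ⟪-(L x (L x (v x))), allOnes n⟫ = 0 := by
          rw [inner_zero_right, inner_neg_left, hLsym x hx0, hker x hx0,
            inner_zero_right]
          ring
        rw [hval] at hd
        exact hd.hasDerivWithinAt
    have := key T ⟨hT, le_refl T⟩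
    simpa [hv0] using this
  intro T hT
  refine ⟨horth T hT, ?_⟩
  -- Part 2: exponential decay of the squared norm
  set h : ℝ → ℝ := fun t => Real.exp (2 * μ ^ 2 * t) * ⟪v t, v t⟫ with hh
  have hderiv : ∀ x : ℝ, 0 ≤ x → HasDerivAt h
      (Real.exp (2 * μ ^ 2 * x) * (2 * μ ^ 2 * ⟪v x, v x⟫
        + (⟪v x, -(L x (L x (v x)))⟫ + ⟪-(L x (L x (v x))), v x⟫))) x := by
    intro x hx
    have he : HasDerivAt (fun t => Real.exp (2 * μ ^ 2 * t))
        (Real.exp (2 * μ ^ 2 * x) * (2 * μ ^ 2 * 1)) x :=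
      ((hasDerivAt_id x).const_mul (2 * μ ^ 2)).exp
    have hi := (hv x hx).inner ℝ (hv x hx)
    have := he.mul hi
    exact this.congr_deriv (by ring)
  have hnonpos : ∀ x : ℝ, 0 ≤ x →
      Real.exp (2 * μ ^ 2 * x) * (2 * μ ^ 2 * ⟪v x, v x⟫
        + (⟪v x, -(L x (L x (v x)))⟫ + ⟪-(L x (L x (v x))), v x⟫)) ≤ 0 := by
    intro x hx
    apply mul_nonpos_of_nonneg_of_nonpos (Real.exp_pos _).le
    have h1 : ⟪v x, -(L x (L x (v x)))⟫ = -‖L x (v x)‖ ^ 2 := by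
      rw [inner_neg_right, real_inner_comm, hLsym x hx, real_inner_self_eq_norm_sq]
    have h2 : ⟪-(L x (L x (v x))), v x⟫ = -‖L x (v x)‖ ^ 2 := by
      rw [inner_neg_left, hLsym x hx, real_inner_self_eq_norm_sq]
    have h3 : ⟪v x, v x⟫ = ‖v x‖ ^ 2 := real_inner_self_eq_norm_sq (v x)
    rw [h1, h2, h3]
    -- need μ² ‖v x‖² ≤ ‖L x (v x)‖²
    have hkey : μ ^ 2 * ‖v x‖ ^ 2 ≤ ‖L x (v x)‖ ^ 2 := by
      have hp := hpos x hx (v x) (horth x hx)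
      have hcs : ⟪L x (v x), v x⟫ ≤ ‖L x (v x)‖ * ‖v x‖ :=
        real_inner_le_norm _ _
      have hmw : μ * ‖v x‖ ^ 2 ≤ ‖L x (v x)‖ * ‖v x‖ := le_trans hp hcs
      rcases eq_or_lt_of_le (norm_nonneg (v x)) with h0 | h0
      · rw [← h0]
        nlinarith [sq_nonneg (‖L x (v x)‖)]
      · have hμn : μ * ‖v x‖ ≤ ‖L x (v x)‖ := by
          have := mul_le_mul_of_nonneg_right hmw (le_of_lt (inv_pos.2 h0))
          calc μ * ‖v x‖ = μ * ‖v x‖ ^ 2 * (‖v x‖)⁻¹ := by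
                field_simp
            _ ≤ ‖L x (v x)‖ * ‖v x‖ * (‖v x‖)⁻¹ := this
            _ = ‖L x (v x)‖ := by field_simp
        have := mul_self_le_mul_self (by positivity) hμn
        calc μ ^ 2 * ‖v x‖ ^ 2 = (μ * ‖v x‖) * (μ * ‖v x‖) := by ring
          _ ≤ ‖L x (v x)‖ * ‖L x (v x)‖ := this
          _ = ‖L x (v x)‖ ^ 2 := (sq (‖L x (v x)‖)).symm
    nlinarith
  -- h is antitone on [0, T]
  have hanti : AntitoneOn h (Set.Icc (0:ℝ) T) := by
    apply antitoneOn_of_deriv_nonpos (convex_Icc 0 T)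
    · intro x hx
      exact (hderiv x hx.1).continuousAt.continuousWithinAt
    · intro x hx
      rw [interior_Icc] at hx
      exact (hderiv x hx.1.le).differentiableAt.differentiableWithinAt
    · intro x hx
      rw [interior_Icc] at hx
      rw [(hderiv x hx.1.le).deriv]
      exact hnonpos x hx.1.le
  have hhT : h T ≤ h 0 := hanti ⟨le_refl 0, hT⟩ ⟨hT, le_refl T⟩ hT
  -- unfold: exp(2μ²T)‖v T‖² ≤ ‖v 0‖²
  have hsq : Real.exp (2 * μ ^ 2 * T) * ‖v T‖ ^ 2 ≤ ‖v 0‖ ^ 2 := by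
    have := hhT
    simp only [hh, mul_zero, Real.exp_zero, one_mul,
      real_inner_self_eq_norm_sq] at this
    exact this
  -- conclude
  have hgoal : ‖v T‖ ^ 2 ≤ (Real.exp (-(μ ^ 2) * T) * ‖v 0‖) ^ 2 := by
    have hE : (Real.exp (-(μ ^ 2) * T)) ^ 2 = (Real.exp (2 * μ ^ 2 * T))⁻¹ := by
      rw [← Real.exp_nat_mul, ← Real.exp_neg]
      congr 1
      push_cast
      ring
    rw [mul_pow, hE]
    have hepos : (0:ℝ) < Real.exp (2 * μ ^ 2 * T) := Real.exp_pos _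
    calc ‖v T‖ ^ 2
        = (Real.exp (2 * μ ^ 2 * T))⁻¹ * (Real.exp (2 * μ ^ 2 * T) * ‖v T‖ ^ 2) := by
          field_simp
      _ ≤ (Real.exp (2 * μ ^ 2 * T))⁻¹ * ‖v 0‖ ^ 2 :=
          mul_le_mul_of_nonneg_left hsq (inv_nonneg.2 hepos.le)
  have h1 : (0:ℝ) ≤ ‖v T‖ := norm_nonneg _
  have h2 : (0:ℝ) ≤ Real.exp (-(μ ^ 2) * T) * ‖v 0‖ := by positivity
  exact (pow_le_pow_iff_left₀ h1 h2 two_ne_zero).1 hgoal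
end

section
/- Let n ≥ 1 and let W : ℝⁿ → ℝ be C² such that Hess W(u) is positive definite for every u ∈ ℝⁿ. Let K* ∈ ℝⁿ and suppose there exists u* ∈ ℝⁿ with ∇W(u*) = K*. Then every differentiable curve u : [0,∞) → ℝⁿ satisfying u′(t) = -Hess W(u(t))·(∇W(u(t)) - K*) for all t ≥ 0 converges exponentially fast to u*: there exist constants C > 0 and λ > 0 such that ‖u(t) - u*‖ ≤ C·e^{-λ t} for all t ≥ 0. -/
open scoped RealInnerProductSpace

open Set

private lemma le_of_deriv_nonneg_Icc {f f' : ℝ → ℝ} {a b : ℝ}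
    (hd : ∀ s ∈ Set.Icc a b, HasDerivAt f (f' s) s)
    (h0 : ∀ s ∈ Set.Icc a b, 0 ≤ f' s) (hab : a ≤ b) : f a ≤ f b := by
  have hmono : MonotoneOn f (Set.Icc a b) := by
    apply monotoneOn_of_deriv_nonneg (convex_Icc a b)
    · exact fun s hs => (hd s hs).continuousAt.continuousWithinAt
    · intro s hs
      rw [interior_Icc] at hs
      exact (hd s (Set.Ioo_subset_Icc_self hs)).differentiableAt.differentiableWithinAt
    · intro s hs
      rw [interior_Icc] at hs
      rw [(hd s (Set.Ioo_subset_Icc_self hs)).deriv]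
      exact h0 s (Set.Ioo_subset_Icc_self hs)
  exact hmono (Set.left_mem_Icc.2 hab) (Set.right_mem_Icc.2 hab) hab

private lemma lt_of_deriv_pos_Icc {f f' : ℝ → ℝ} {a b : ℝ}
    (hd : ∀ s ∈ Set.Icc a b, HasDerivAt f (f' s) s)
    (h0 : ∀ s ∈ Set.Ioo a b, 0 < f' s) (hab : a < b) : f a < f b := by
  have hmono : StrictMonoOn f (Set.Icc a b) := by
    apply strictMonoOn_of_deriv_pos (convex_Icc a b)
    · exact fun s hs => (hd s hs).continuousAt.continuousWithinAt
    · intro s hs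
      rw [interior_Icc] at hs
      rw [(hd s (Set.Ioo_subset_Icc_self hs)).deriv]
      exact h0 s hs
  exact hmono (Set.left_mem_Icc.2 hab.le) (Set.right_mem_Icc.2 hab.le) hab

private lemma le_of_deriv_nonneg_Ici {f f' : ℝ → ℝ} {a t : ℝ}
    (hd : ∀ s ∈ Set.Ici a, HasDerivAt f (f' s) s)
    (h0 : ∀ s ∈ Set.Ici a, 0 ≤ f' s) (hat : a ≤ t) : f a ≤ f t := by
  have hmono : MonotoneOn f (Set.Ici a) := by
    apply monotoneOn_of_deriv_nonneg (convex_Ici a)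
    · exact fun s hs => (hd s hs).continuousAt.continuousWithinAt
    · intro s hs
      rw [interior_Ici] at hs
      exact (hd s (Set.Ioi_subset_Ici_self hs)).differentiableAt.differentiableWithinAt
    · intro s hs
      rw [interior_Ici] at hs
      rw [(hd s (Set.Ioi_subset_Ici_self hs)).deriv]
      exact h0 s (Set.Ioi_subset_Ici_self hs)
  exact hmono (Set.self_mem_Ici) hat hat

private lemma ge_of_deriv_nonpos_Ici {f f' : ℝ → ℝ} {a t : ℝ}
    (hd : ∀ s ∈ Set.Ici a, HasDerivAt f (f' s) s)
    (h0 : ∀ s ∈ Set.Ici a, f' s ≤ 0) (hat : a ≤ t) : f t ≤ f a := by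
  have := le_of_deriv_nonneg_Ici (f := fun s => -f s) (f' := fun s => -f' s)
    (fun s hs => (hd s hs).neg) (fun s hs => neg_nonneg.2 (h0 s hs)) hat
  simpa using this

section Aux
variable {n : ℕ} {W : EuclideanSpace ℝ (Fin n) → ℝ} {Kstar ustar : EuclideanSpace ℝ (Fin n)}

private lemma line_deriv1 (hW : ContDiff ℝ 2 W) (c d : EuclideanSpace ℝ (Fin n)) (s : ℝ) :
    HasDerivAt (fun s : ℝ => W (c + s • d) - ⟪Kstar, c + s • d⟫)
      ⟪gradient W (c + s • d) - Kstar, d⟫ s := by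
  have hγ : HasDerivAt (fun s : ℝ => c + s • d) d s := by
    simpa using ((hasDerivAt_id s).smul_const d).const_add c
  have hWg : HasGradientAt W (gradient W (c + s • d)) (c + s • d) :=
    (hW.differentiable (by norm_num) _).hasGradientAt
  have h1 : HasDerivAt (fun s : ℝ => W (c + s • d)) ⟪gradient W (c + s • d), d⟫ s := by
    have := hWg.hasFDerivAt.comp_hasDerivAt s hγ
    simpa [InnerProductSpace.toDual_apply_apply, Function.comp_def] using this
  have h2 : HasDerivAt (fun s : ℝ => ⟪Kstar, c + s • d⟫) ⟪Kstar, d⟫ s := by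
    have := (hasDerivAt_const s Kstar).inner ℝ hγ
    simpa using this
  have := h1.sub h2
  simpa [inner_sub_left, Pi.sub_def] using this

private lemma line_deriv2 (hg : Differentiable ℝ (gradient W))
    (c d : EuclideanSpace ℝ (Fin n)) (s : ℝ) :
    HasDerivAt (fun s : ℝ => ⟪gradient W (c + s • d) - Kstar, d⟫)
      ⟪(fderiv ℝ (gradient W) (c + s • d)) d, d⟫ s := by
  have hγ : HasDerivAt (fun s : ℝ => c + s • d) d s := by
    simpa using ((hasDerivAt_id s).smul_const d).const_add c
  have h1 : HasDerivAt (fun s : ℝ => gradient W (c + s • d) - Kstar)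
      ((fderiv ℝ (gradient W) (c + s • d)) d) s :=
    ((hg _).hasFDerivAt.comp_hasDerivAt s hγ).sub_const Kstar
  have := h1.inner ℝ (hasDerivAt_const s d)
  simpa using this

private lemma e_zero (d : EuclideanSpace ℝ (Fin n)) : ustar + (0:ℝ) • d = ustar := by simp

private lemma e_one (x : EuclideanSpace ℝ (Fin n)) : ustar + (1:ℝ) • (x - ustar) = x := by
  rw [one_smul]; abel

private lemma gp_mono (hg : Differentiable ℝ (gradient W))
    (hpos' : ∀ x w : EuclideanSpace ℝ (Fin n), 0 ≤ ⟪(fderiv ℝ (gradient W) x) w, w⟫)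
    (c d : EuclideanSpace ℝ (Fin n)) {a b : ℝ} (hab : a ≤ b) :
    ⟪gradient W (c + a • d) - Kstar, d⟫ ≤ ⟪gradient W (c + b • d) - Kstar, d⟫ :=
  le_of_deriv_nonneg_Icc (fun s _ => line_deriv2 hg c d s) (fun s _ => hpos' _ _) hab

private lemma gp_strict (hg : Differentiable ℝ (gradient W))
    (hpos : ∀ x w : EuclideanSpace ℝ (Fin n), w ≠ 0 →
      0 < ⟪(fderiv ℝ (gradient W) x) w, w⟫)
    (c d : EuclideanSpace ℝ (Fin n)) (hd : d ≠ 0) {a b : ℝ} (hab : a < b) :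
    ⟪gradient W (c + a • d) - Kstar, d⟫ < ⟪gradient W (c + b • d) - Kstar, d⟫ :=
  lt_of_deriv_pos_Icc (fun s _ => line_deriv2 hg c d s) (fun s _ => hpos _ _ hd) hab

private lemma Ef_nonneg (hW : ContDiff ℝ 2 W) (hg : Differentiable ℝ (gradient W))
    (hpos' : ∀ x w : EuclideanSpace ℝ (Fin n), 0 ≤ ⟪(fderiv ℝ (gradient W) x) w, w⟫)
    (hcrit : gradient W ustar = Kstar) (x : EuclideanSpace ℝ (Fin n)) :
    W ustar - ⟪Kstar, ustar⟫ ≤ W x - ⟪Kstar, x⟫ := by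
  have key : ∀ s ∈ Set.Icc (0:ℝ) 1,
      0 ≤ ⟪gradient W (ustar + s • (x - ustar)) - Kstar, x - ustar⟫ := by
    intro s hs
    have := gp_mono (Kstar := Kstar) hg hpos' ustar (x - ustar) hs.1
    rwa [e_zero, hcrit, sub_self, inner_zero_left] at this
  have h := le_of_deriv_nonneg_Icc
    (f := fun s : ℝ => W (ustar + s • (x - ustar)) - ⟪Kstar, ustar + s • (x - ustar)⟫)
    (fun s _ => line_deriv1 hW ustar (x - ustar) s) key zero_le_one
  rwa [e_zero, e_one] at h

private lemma Ef_le_inner (hW : ContDiff ℝ 2 W) (hg : Differentiable ℝ (gradient W))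
    (hpos' : ∀ x w : EuclideanSpace ℝ (Fin n), 0 ≤ ⟪(fderiv ℝ (gradient W) x) w, w⟫)
    (x : EuclideanSpace ℝ (Fin n)) :
    (W x - ⟪Kstar, x⟫) - (W ustar - ⟪Kstar, ustar⟫) ≤ ⟪gradient W x - Kstar, x - ustar⟫ := by
  set d := x - ustar with hd
  set L := ⟪gradient W x - Kstar, d⟫ with hL
  have hL' : L = ⟪gradient W (ustar + (1:ℝ) • d) - Kstar, d⟫ := by rw [e_one]
  have h := le_of_deriv_nonneg_Icc
    (f := fun s : ℝ => L * s - (W (ustar + s • d) - ⟪Kstar, ustar + s • d⟫))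
    (f' := fun s : ℝ => L - ⟪gradient W (ustar + s • d) - Kstar, d⟫)
    (fun s _ => by
      simpa [Pi.sub_def] using ((hasDerivAt_id s).const_mul L).sub (line_deriv1 hW ustar d s))
    (fun s hs => by
      rw [sub_nonneg, hL']
      exact gp_mono hg hpos' ustar d hs.2) zero_le_one
  rw [e_zero, e_one] at h
  simp only [mul_zero, mul_one] at h
  linarith

private lemma Ef_pos (hW : ContDiff ℝ 2 W) (hg : Differentiable ℝ (gradient W))
    (hpos : ∀ x w : EuclideanSpace ℝ (Fin n), w ≠ 0 →
      0 < ⟪(fderiv ℝ (gradient W) x) w, w⟫)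
    (hcrit : gradient W ustar = Kstar) (w : EuclideanSpace ℝ (Fin n)) (hw : w ≠ 0) :
    W ustar - ⟪Kstar, ustar⟫ < W (ustar + w) - ⟪Kstar, ustar + w⟫ := by
  have hgp0 : ⟪gradient W (ustar + (0:ℝ) • w) - Kstar, w⟫ = 0 := by
    rw [e_zero, hcrit, sub_self, inner_zero_left]
  have h := lt_of_deriv_pos_Icc
    (f := fun s : ℝ => W (ustar + s • w) - ⟪Kstar, ustar + s • w⟫)
    (fun s _ => line_deriv1 hW ustar w s)
    (fun s hs => by
      have := gp_strict (Kstar := Kstar) hg hpos ustar w hw hs.1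
      rwa [hgp0] at this) one_pos
  rw [e_zero] at h
  rw [show ustar + (1:ℝ) • w = ustar + w by rw [one_smul]] at h
  exact h


private lemma seg_mem {R : ℝ} {x : EuclideanSpace ℝ (Fin n)}
    (hx : x ∈ Metric.closedBall ustar R) {s : ℝ} (hs : s ∈ Set.Icc (0:ℝ) 1) :
    ustar + s • (x - ustar) ∈ Metric.closedBall ustar R := by
  rw [Metric.mem_closedBall, dist_eq_norm] at hx ⊢
  have h1 : ustar + s • (x - ustar) - ustar = s • (x - ustar) := by abel
  rw [h1, norm_smul]
  calc ‖s‖ * ‖x - ustar‖ ≤ 1 * ‖x - ustar‖ := by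
        apply mul_le_mul_of_nonneg_right _ (norm_nonneg _)
        rw [Real.norm_eq_abs, abs_of_nonneg hs.1]; exact hs.2
    _ ≤ R := by rw [one_mul]; exact hx

private lemma ray_bound (hW : ContDiff ℝ 2 W) (hg : Differentiable ℝ (gradient W))
    (hpos' : ∀ x w : EuclideanSpace ℝ (Fin n), 0 ≤ ⟪(fderiv ℝ (gradient W) x) w, w⟫)
    {m : ℝ}
    (hmle : ∀ w : EuclideanSpace ℝ (Fin n), ‖w‖ = 1 →
      m ≤ (W (ustar + w) - ⟪Kstar, ustar + w⟫) - (W ustar - ⟪Kstar, ustar⟫))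
    (x : EuclideanSpace ℝ (Fin n)) (hx1 : 1 ≤ ‖x - ustar‖) :
    m * ‖x - ustar‖ ≤ (W x - ⟪Kstar, x⟫) - (W ustar - ⟪Kstar, ustar⟫) := by
  set s := ‖x - ustar‖ with hs
  have hs0 : (0:ℝ) < s := lt_of_lt_of_le one_pos hx1
  set w := s⁻¹ • (x - ustar) with hw
  have hw1 : ‖w‖ = 1 := by
    rw [hw, norm_smul, Real.norm_eq_abs, abs_of_pos (inv_pos.2 hs0), ← hs,
      inv_mul_cancel₀ hs0.ne']
  have hxw : ustar + s • w = x := by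
    rw [hw, smul_smul, mul_inv_cancel₀ hs0.ne', one_smul]; abel
  set L := ⟪gradient W (ustar + w) - Kstar, w⟫ with hL
  have hL' : ∀ t : ℝ, L = ⟪gradient W (ustar + (1:ℝ) • w) - Kstar, w⟫ := by
    intro t; rw [one_smul]
  -- monotonicity of t ↦ g t - L * t on [1, s]
  have h := le_of_deriv_nonneg_Icc
    (f := fun t : ℝ => (W (ustar + t • w) - ⟪Kstar, ustar + t • w⟫) - L * t)
    (f' := fun t : ℝ => ⟪gradient W (ustar + t • w) - Kstar, w⟫ - L)
    (fun t _ => by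
      simpa [Pi.sub_def] using (line_deriv1 hW ustar w t).sub ((hasDerivAt_id t).const_mul L))
    (fun t ht => by
      rw [sub_nonneg, hL' t]
      exact gp_mono (Kstar := Kstar) hg hpos' ustar w ht.1) hx1
  rw [hxw] at h
  -- h : (g 1 - L * 1) ≤ (Ef-ish x) - L * s
  have hB : (W (ustar + w) - ⟪Kstar, ustar + w⟫) - (W ustar - ⟪Kstar, ustar⟫) ≤ L := by
    have := Ef_le_inner (Kstar := Kstar) (ustar := ustar) hW hg hpos' (ustar + w)
    rwa [add_sub_cancel_left] at this
  have hm' : m ≤ (W (ustar + w) - ⟪Kstar, ustar + w⟫) - (W ustar - ⟪Kstar, ustar⟫) :=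
    hmle w hw1
  have hLm : m ≤ L := hm'.trans hB
  have hprod : (s - 1) * m ≤ (s - 1) * L :=
    mul_le_mul_of_nonneg_left hLm (by linarith)
  rw [show ustar + (1:ℝ) • w = ustar + w by rw [one_smul]] at h
  nlinarith [h, hprod, hm']

private lemma quant_D (hg : Differentiable ℝ (gradient W))
    (hcrit : gradient W ustar = Kstar) {R μ : ℝ}
    (hμb : ∀ y ∈ Metric.closedBall ustar R, ∀ w : EuclideanSpace ℝ (Fin n),
      μ * ‖w‖ ^ 2 ≤ ⟪(fderiv ℝ (gradient W) y) w, w⟫)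
    {x : EuclideanSpace ℝ (Fin n)} (hx : x ∈ Metric.closedBall ustar R) :
    μ * ‖x - ustar‖ ^ 2 ≤ ⟪gradient W x - Kstar, x - ustar⟫ := by
  set d := x - ustar with hd
  have h := le_of_deriv_nonneg_Icc
    (f := fun t : ℝ => ⟪gradient W (ustar + t • d) - Kstar, d⟫ - μ * ‖d‖ ^ 2 * t)
    (f' := fun t : ℝ => ⟪(fderiv ℝ (gradient W) (ustar + t • d)) d, d⟫ - μ * ‖d‖ ^ 2)
    (fun t _ => by
      simpa [Pi.sub_def] using (line_deriv2 (Kstar := Kstar) hg ustar d t).sub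
        ((hasDerivAt_id t).const_mul (μ * ‖d‖ ^ 2)))
    (fun t ht => by
      rw [sub_nonneg]
      exact hμb _ (seg_mem hx ht) d) zero_le_one
  rw [e_zero, e_one] at h
  rw [hcrit, sub_self, inner_zero_left] at h
  simp only [mul_zero, mul_one, sub_zero, zero_sub, neg_le_sub_iff_le_add] at h
  linarith

private lemma quant_A (hW : ContDiff ℝ 2 W) (hg : Differentiable ℝ (gradient W))
    (hcrit : gradient W ustar = Kstar) {R μ : ℝ}
    (hμb : ∀ y ∈ Metric.closedBall ustar R, ∀ w : EuclideanSpace ℝ (Fin n),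
      μ * ‖w‖ ^ 2 ≤ ⟪(fderiv ℝ (gradient W) y) w, w⟫)
    {x : EuclideanSpace ℝ (Fin n)} (hx : x ∈ Metric.closedBall ustar R) :
    μ / 2 * ‖x - ustar‖ ^ 2 ≤ (W x - ⟪Kstar, x⟫) - (W ustar - ⟪Kstar, ustar⟫) := by
  set d := x - ustar with hd
  -- first: μ‖d‖² t ≤ gp t on [0,1]
  have hφ : ∀ t ∈ Set.Icc (0:ℝ) 1,
      μ * ‖d‖ ^ 2 * t ≤ ⟪gradient W (ustar + t • d) - Kstar, d⟫ := by
    intro t ht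
    have h := le_of_deriv_nonneg_Icc
      (f := fun r : ℝ => ⟪gradient W (ustar + r • d) - Kstar, d⟫ - μ * ‖d‖ ^ 2 * r)
      (f' := fun r : ℝ => ⟪(fderiv ℝ (gradient W) (ustar + r • d)) d, d⟫ - μ * ‖d‖ ^ 2)
      (fun r _ => by
        simpa [Pi.sub_def] using (line_deriv2 (Kstar := Kstar) hg ustar d r).sub
          ((hasDerivAt_id r).const_mul (μ * ‖d‖ ^ 2)))
      (fun r hr => by
        rw [sub_nonneg]
        exact hμb _ (seg_mem hx ⟨hr.1, hr.2.trans ht.2⟩) d) ht.1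
    rw [e_zero, hcrit, sub_self, inner_zero_left] at h
    simp only [mul_zero, sub_zero, zero_sub, neg_le_sub_iff_le_add] at h
    linarith
  have h2 := le_of_deriv_nonneg_Icc
    (f := fun t : ℝ => (W (ustar + t • d) - ⟪Kstar, ustar + t • d⟫) - μ * ‖d‖ ^ 2 / 2 * t ^ 2)
    (f' := fun t : ℝ => ⟪gradient W (ustar + t • d) - Kstar, d⟫ - μ * ‖d‖ ^ 2 * t)
    (fun t _ => by
      have := (line_deriv1 (Kstar := Kstar) hW ustar d t).sub
        ((hasDerivAt_pow 2 t).const_mul (μ * ‖d‖ ^ 2 / 2))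
      simp only [Pi.sub_def] at this
      refine this.congr_deriv ?_
      push_cast
      ring)
    (fun t ht => sub_nonneg.2 (hφ t ht)) zero_le_one
  rw [e_zero, e_one] at h2
  nlinarith [h2]

end Aux

set_option maxHeartbeats 1000000 in

/-- Let `W : ℝⁿ → ℝ` be C² with `Hess W(u)` positive definite for every `u`.
If `∇W(u*) = K*` for some `u*`, then every solution `u : [0, ∞) → ℝⁿ` of the combinatorial
Calabi flow `u' = -Hess W(u)(∇W(u) - K*)` converges exponentially fast to `u*`. -/
theorem stmt_11 (n : ℕ) (hn : 1 ≤ n)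
    (W : EuclideanSpace ℝ (Fin n) → ℝ)
    (hW : ContDiff ℝ 2 W)
    (hpos : ∀ u w : EuclideanSpace ℝ (Fin n), w ≠ 0 →
      0 < ⟪(fderiv ℝ (gradient W) u) w, w⟫)
    (Kstar ustar : EuclideanSpace ℝ (Fin n))
    (hcrit : gradient W ustar = Kstar)
    (u : ℝ → EuclideanSpace ℝ (Fin n))
    (hu : ∀ t : ℝ, 0 ≤ t → HasDerivAt u
      (-(fderiv ℝ (gradient W) (u t)) (gradient W (u t) - Kstar)) t) :
    ∃ C > (0 : ℝ), ∃ lam > (0 : ℝ), ∀ t : ℝ, 0 ≤ t →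
      ‖u t - ustar‖ ≤ C * Real.exp (-lam * t) := by
  -- basic regularity
  have hgc1 : ContDiff ℝ 1 (gradient W) := by
    have h1 : ContDiff ℝ 1 (fderiv ℝ W) := hW.fderiv_right (by norm_num)
    have h2 : gradient W = fun x => (InnerProductSpace.toDual ℝ _).symm (fderiv ℝ W x) := rfl
    rw [h2]
    exact (InnerProductSpace.toDual ℝ
      _).symm.toContinuousLinearEquiv.toContinuousLinearMap.contDiff.comp h1
  have hg : Differentiable ℝ (gradient W) := hgc1.differentiable one_ne_zero
  have hHcont : Continuous (fun x => fderiv ℝ (gradient W) x) := hgc1.continuous_fderiv one_ne_zero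
  have hpos' : ∀ x w : EuclideanSpace ℝ (Fin n),
      0 ≤ ⟪(fderiv ℝ (gradient W) x) w, w⟫ := by
    intro x w
    by_cases hw : w = 0
    · simp [hw]
    · exact (hpos x w hw).le
  -- a unit vector
  have he₀ : ∃ e₀ : EuclideanSpace ℝ (Fin n), ‖e₀‖ = 1 := by
    refine ⟨EuclideanSpace.single ⟨0, hn⟩ (1:ℝ), ?_⟩
    simp [EuclideanSpace.norm_single]
  obtain ⟨e₀, he₀⟩ := he₀
  -- the minimum of the energy gap on the unit sphere
  have hc1 : Continuous fun w : EuclideanSpace ℝ (Fin n) => W (ustar + w) :=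
    hW.continuous.comp (continuous_const.add continuous_id)
  have hc2 : Continuous fun w : EuclideanSpace ℝ (Fin n) => (⟪Kstar, ustar + w⟫ : ℝ) :=
    continuous_const.inner (continuous_const.add continuous_id)
  have hcf : Continuous fun w : EuclideanSpace ℝ (Fin n) =>
      (W (ustar + w) - ⟪Kstar, ustar + w⟫) - (W ustar - ⟪Kstar, ustar⟫) :=
    (hc1.sub hc2).sub continuous_const
  obtain ⟨w₀, hw₀S, hw₀min⟩ := (isCompact_sphere (0 : EuclideanSpace ℝ (Fin n)) 1).exists_isMinOn
    ⟨e₀, by rwa [mem_sphere_zero_iff_norm]⟩ hcf.continuousOn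
  set m : ℝ := (W (ustar + w₀) - ⟪Kstar, ustar + w₀⟫) - (W ustar - ⟪Kstar, ustar⟫) with hm_def
  have hw₀1 : ‖w₀‖ = 1 := mem_sphere_zero_iff_norm.1 hw₀S
  have hm : 0 < m := by
    have := Ef_pos hW hg hpos hcrit w₀ (by rw [← norm_ne_zero_iff, hw₀1]; norm_num)
    rw [hm_def]; linarith
  have hmle : ∀ w : EuclideanSpace ℝ (Fin n), ‖w‖ = 1 →
      m ≤ (W (ustar + w) - ⟪Kstar, ustar + w⟫) - (W ustar - ⟪Kstar, ustar⟫) := by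
    intro w hw
    exact isMinOn_iff.1 hw₀min w (by rwa [mem_sphere_zero_iff_norm])
  -- derivative of the energy along the flow
  have hEu : ∀ t : ℝ, 0 ≤ t → HasDerivAt (fun t => W (u t) - ⟪Kstar, u t⟫)
      (-⟪(fderiv ℝ (gradient W) (u t)) (gradient W (u t) - Kstar),
        gradient W (u t) - Kstar⟫) t := by
    intro t ht
    have hu' := hu t ht
    have hWg : HasGradientAt W (gradient W (u t)) (u t) :=
      (hW.differentiable (by norm_num) _).hasGradientAt
    have h1 : HasDerivAt (fun t => W (u t))
        ⟪gradient W (u t), -(fderiv ℝ (gradient W) (u t)) (gradient W (u t) - Kstar)⟫ t := by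
      have := hWg.hasFDerivAt.comp_hasDerivAt t hu'
      simpa [InnerProductSpace.toDual_apply_apply, Function.comp_def] using this
    have h2 : HasDerivAt (fun t => (⟪Kstar, u t⟫ : ℝ))
        ⟪Kstar, -(fderiv ℝ (gradient W) (u t)) (gradient W (u t) - Kstar)⟫ t := by
      have := (hasDerivAt_const t Kstar).inner ℝ hu'
      simpa using this
    have h3 := h1.sub h2
    refine h3.congr_deriv ?_
    rw [← inner_sub_left, inner_neg_right, real_inner_comm]
  -- the energy is nonincreasing
  have hdec : ∀ t : ℝ, 0 ≤ t → W (u t) - ⟪Kstar, u t⟫ ≤ W (u 0) - ⟪Kstar, u 0⟫ := by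
    intro t ht
    exact ge_of_deriv_nonpos_Ici (a := 0)
      (f' := fun s => -⟪(fderiv ℝ (gradient W) (u s)) (gradient W (u s) - Kstar),
        gradient W (u s) - Kstar⟫)
      (fun s hs => hEu s hs) (fun s _ => neg_nonpos.2 (hpos' _ _)) ht
  set E₀ : ℝ := (W (u 0) - ⟪Kstar, u 0⟫) - (W ustar - ⟪Kstar, ustar⟫) with hE₀_def
  have hE₀ : 0 ≤ E₀ := by
    have := Ef_nonneg hW hg hpos' hcrit (u 0)
    rw [hE₀_def]; linarith
  set R : ℝ := max 1 (E₀ / m) with hR_def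
  have hR1 : (1:ℝ) ≤ R := le_max_left _ _
  have hR0 : (0:ℝ) ≤ R := by linarith
  -- the trajectory stays in the closed ball of radius R
  have htraj : ∀ t : ℝ, 0 ≤ t → u t ∈ Metric.closedBall ustar R := by
    intro t ht
    rw [Metric.mem_closedBall, dist_eq_norm]
    by_cases hb : ‖u t - ustar‖ ≤ 1
    · exact hb.trans hR1
    · push_neg at hb
      have hray := ray_bound hW hg hpos' hmle (u t) hb.le
      have hEt : (W (u t) - ⟪Kstar, u t⟫) - (W ustar - ⟪Kstar, ustar⟫) ≤ E₀ := by
        have := hdec t ht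
        rw [hE₀_def]; linarith
      have h1 : m * ‖u t - ustar‖ ≤ E₀ := le_trans hray hEt
      have h2 : ‖u t - ustar‖ ≤ E₀ / m := by
        rw [le_div_iff₀ hm]
        linarith [mul_comm m ‖u t - ustar‖]
      exact h2.trans (le_max_right _ _)
  -- uniform lower bound on the Hessian on the ball
  have hKcpt : IsCompact ((Metric.closedBall ustar R) ×ˢ
      (Metric.sphere (0 : EuclideanSpace ℝ (Fin n)) 1)) :=
    (isCompact_closedBall ustar R).prod (isCompact_sphere 0 1)
  have hcont2 : Continuous fun p : EuclideanSpace ℝ (Fin n) × EuclideanSpace ℝ (Fin n) =>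
      (⟪(fderiv ℝ (gradient W) p.1) p.2, p.2⟫ : ℝ) :=
    ((hHcont.comp continuous_fst).clm_apply continuous_snd).inner continuous_snd
  obtain ⟨p₀, hp₀, hp₀min⟩ := hKcpt.exists_isMinOn
    ⟨(ustar, e₀), Set.mk_mem_prod (Metric.mem_closedBall_self hR0)
      (by rwa [mem_sphere_zero_iff_norm])⟩ hcont2.continuousOn
  set μ : ℝ := ⟪(fderiv ℝ (gradient W) p₀.1) p₀.2, p₀.2⟫ with hμ_def
  have hμpos : 0 < μ := by
    apply hpos p₀.1 p₀.2
    have := hp₀.2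
    rw [mem_sphere_zero_iff_norm] at this
    rw [← norm_ne_zero_iff, this]; norm_num
  have hμb : ∀ y ∈ Metric.closedBall ustar R, ∀ w : EuclideanSpace ℝ (Fin n),
      μ * ‖w‖ ^ 2 ≤ ⟪(fderiv ℝ (gradient W) y) w, w⟫ := by
    intro y hy w
    by_cases hw : w = 0
    · simp [hw]
    · have hnw : (0:ℝ) < ‖w‖ := norm_pos_iff.2 hw
      set v := ‖w‖⁻¹ • w with hv_def
      have hv1 : ‖v‖ = 1 := by
        rw [hv_def, norm_smul, Real.norm_eq_abs, abs_of_pos (inv_pos.2 hnw),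
          inv_mul_cancel₀ hnw.ne']
      have hμv : μ ≤ ⟪(fderiv ℝ (gradient W) y) v, v⟫ :=
        isMinOn_iff.1 hp₀min (y, v)
          (Set.mk_mem_prod hy (by rwa [mem_sphere_zero_iff_norm]))
      have hwv : w = ‖w‖ • v := by
        rw [hv_def, smul_smul, mul_inv_cancel₀ hnw.ne', one_smul]
      have hEq : (⟪(fderiv ℝ (gradient W) y) w, w⟫ : ℝ)
          = ‖w‖ ^ 2 * ⟪(fderiv ℝ (gradient W) y) v, v⟫ := by
        conv_lhs => rw [hwv]
        rw [ContinuousLinearMap.map_smul, real_inner_smul_left, real_inner_smul_right]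
        ring
      rw [hEq]
      nlinarith [sq_nonneg ‖w‖]
  -- Gronwall-type decay of the energy
  have hgron : ∀ t : ℝ, 0 ≤ t →
      (W (u t) - ⟪Kstar, u t⟫) - (W ustar - ⟪Kstar, ustar⟫) ≤ E₀ * Real.exp (-(μ^2) * t) := by
    intro t ht
    have hder : ∀ s ∈ Set.Ici (0:ℝ), HasDerivAt
        (fun s => ((W (u s) - ⟪Kstar, u s⟫) - (W ustar - ⟪Kstar, ustar⟫)) * Real.exp (μ^2 * s))
        ((-⟪(fderiv ℝ (gradient W) (u s)) (gradient W (u s) - Kstar),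
            gradient W (u s) - Kstar⟫) * Real.exp (μ^2 * s)
          + ((W (u s) - ⟪Kstar, u s⟫) - (W ustar - ⟪Kstar, ustar⟫))
            * (Real.exp (μ^2 * s) * μ^2)) s := by
      intro s hs
      have hexp : HasDerivAt (fun s : ℝ => Real.exp (μ^2 * s)) (Real.exp (μ^2 * s) * μ^2) s := by
        have := ((hasDerivAt_id s).const_mul (μ^2)).exp
        simpa using this
      exact ((hEu s hs).sub_const (W ustar - ⟪Kstar, ustar⟫)).mul hexp
    have hnonpos : ∀ s ∈ Set.Ici (0:ℝ),
        (-⟪(fderiv ℝ (gradient W) (u s)) (gradient W (u s) - Kstar),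
            gradient W (u s) - Kstar⟫) * Real.exp (μ^2 * s)
          + ((W (u s) - ⟪Kstar, u s⟫) - (W ustar - ⟪Kstar, ustar⟫))
            * (Real.exp (μ^2 * s) * μ^2) ≤ 0 := by
      intro s hs
      have hxK := htraj s hs
      have hP : μ * ‖gradient W (u s) - Kstar‖ ^ 2 ≤
          ⟪(fderiv ℝ (gradient W) (u s)) (gradient W (u s) - Kstar),
            gradient W (u s) - Kstar⟫ := hμb _ hxK _
      -- μ * E ≤ ‖F‖²
      have hB := Ef_le_inner (Kstar := Kstar) (ustar := ustar) hW hg hpos' (u s)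
      have hD := quant_D hg hcrit hμb hxK
      have hCS := real_inner_le_norm (gradient W (u s) - Kstar) (u s - ustar)
      set a : ℝ := ‖u s - ustar‖ with ha_def
      set b : ℝ := ‖gradient W (u s) - Kstar‖ with hb_def
      set c : ℝ := ⟪gradient W (u s) - Kstar, u s - ustar⟫ with hc_def
      set P : ℝ := ⟪(fderiv ℝ (gradient W) (u s)) (gradient W (u s) - Kstar),
            gradient W (u s) - Kstar⟫ with hP_def
      set Ev : ℝ := (W (u s) - ⟪Kstar, u s⟫) - (W ustar - ⟪Kstar, ustar⟫) with hEv_def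
      have ha0 : 0 ≤ a := norm_nonneg _
      have hb0 : 0 ≤ b := norm_nonneg _
      have hμd : μ * a ≤ b := by
        rcases eq_or_lt_of_le ha0 with hz | hz
        · rw [← hz, mul_zero]; exact hb0
        · nlinarith [hD, hCS]
      have hEF : μ * Ev ≤ b ^ 2 := by nlinarith [hB, hCS, hμd, ha0, hb0, hμpos]
      have hexp_pos : 0 < Real.exp (μ^2 * s) := Real.exp_pos _
      have h1 : Ev * μ^2 ≤ P := by
        nlinarith [mul_le_mul_of_nonneg_left hEF hμpos.le, hP]
      calc -P * Real.exp (μ^2 * s) + Ev * (Real.exp (μ^2 * s) * μ^2)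
          = (Ev * μ^2 - P) * Real.exp (μ^2 * s) := by ring
        _ ≤ 0 := mul_nonpos_of_nonpos_of_nonneg (by linarith) hexp_pos.le
    have hfin := ge_of_deriv_nonpos_Ici (a := 0) hder hnonpos ht
    simp only [mul_zero, Real.exp_zero, mul_one] at hfin
    rw [← hE₀_def] at hfin
    -- hfin : Efu t * exp (μ² t) ≤ E₀
    have hexp_pos : 0 < Real.exp (μ^2 * t) := Real.exp_pos _
    rw [show (-(μ^2) * t) = -(μ^2 * t) by ring, Real.exp_neg]
    rw [← le_div_iff₀ hexp_pos] at hfin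
    rwa [← div_eq_mul_inv]
  -- conclusion
  refine ⟨Real.sqrt (2 * E₀ / μ) + 1, by positivity, μ^2 / 2, by positivity, ?_⟩
  intro t ht
  have hxK := htraj t ht
  have hA := quant_A hW hg hcrit hμb hxK
  have hG := hgron t ht
  have key : ‖u t - ustar‖ ^ 2 ≤
      (Real.sqrt (2 * E₀ / μ) * Real.exp (-(μ^2/2) * t)) ^ 2 := by
    have hsq : (Real.sqrt (2 * E₀ / μ)) ^ 2 = 2 * E₀ / μ :=
      Real.sq_sqrt (by positivity)
    have hexp2 : (Real.exp (-(μ^2/2) * t)) ^ 2 = Real.exp (-(μ^2) * t) := by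
      rw [sq, ← Real.exp_add]
      ring_nf
    rw [mul_pow, hsq, hexp2]
    have h1 : μ/2 * ‖u t - ustar‖ ^ 2 ≤ E₀ * Real.exp (-(μ^2) * t) := le_trans hA hG
    rw [div_mul_eq_mul_div, le_div_iff₀ hμpos]
    nlinarith [h1]
  have hfin := Real.sqrt_le_sqrt key
  rw [Real.sqrt_sq (norm_nonneg _), Real.sqrt_sq (by positivity)] at hfin
  have hexp_pos : 0 < Real.exp (-(μ^2/2) * t) := Real.exp_pos _
  calc ‖u t - ustar‖ ≤ Real.sqrt (2 * E₀ / μ) * Real.exp (-(μ^2/2) * t) := hfin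
    _ ≤ (Real.sqrt (2 * E₀ / μ) + 1) * Real.exp (-(μ^2/2) * t) := by nlinarith [hexp_pos]
end

section
/- Let n ≥ 1 and let W : ℝⁿ → ℝ be C² and convex with ∇W(u + c·𝟙) = ∇W(u) for all u ∈ ℝⁿ, c ∈ ℝ. Let u* ∈ ℝⁿ be such that ∇W(u*) = c₀·𝟙 for some c₀ ∈ ℝ and ⟨Hess W(u*)·w, w⟩ > 0 for every nonzero w ∈ ℝⁿ with ⟨w,𝟙⟩ = 0. Then there exists δ > 0 such that every differentiable curve u : [0,∞) → ℝⁿ satisfying u′(t) = -Hess W(u(t))·∇W(u(t)) for all t ≥ 0, with ⟨u(0),𝟙⟩ = ⟨u*,𝟙⟩ and ‖u(0) - u*‖ < δ, converges exponentially fast to u*: there exist C > 0 and λ > 0 with ‖u(t) - u*‖ ≤ C·e^{-λ t} for all t ≥ 0. -/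
open scoped RealInnerProductSpace
open InnerProductSpace

set_option maxHeartbeats 2000000 in
/-- Let `W` be C² and convex with `∇W` invariant under translations by
multiples of `𝟙`, and let `u*` satisfy `∇W(u*) = c₀·𝟙` with `⟨Hess W(u*) w, w⟩ > 0` for
every nonzero `w ⊥ 𝟙`.  Then there is `δ > 0` such that every solution
`u : [0, ∞) → ℝⁿ` of the combinatorial Calabi flow `u' = -Hess W(u) ∇W(u)` with
`⟨u(0), 𝟙⟩ = ⟨u*, 𝟙⟩` and `‖u(0) - u*‖ < δ` converges exponentially fast to `u*`. -/
theorem stmt_13 (n : ℕ) (hn : 1 ≤ n)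
    (W : EuclideanSpace ℝ (Fin n) → ℝ)
    (hW : ContDiff ℝ 2 W)
    (hconv : ConvexOn ℝ Set.univ W)
    (hinv : ∀ (u : EuclideanSpace ℝ (Fin n)) (c : ℝ),
      gradient W (u + c • allOnes n) = gradient W u)
    (ustar : EuclideanSpace ℝ (Fin n)) (c₀ : ℝ)
    (hcrit : gradient W ustar = c₀ • allOnes n)
    (hpos : ∀ w : EuclideanSpace ℝ (Fin n), w ≠ 0 → ⟪w, allOnes n⟫ = 0 →
      0 < ⟪(fderiv ℝ (gradient W) ustar) w, w⟫) :
    ∃ δ > (0 : ℝ), ∀ u : ℝ → EuclideanSpace ℝ (Fin n),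
      (∀ t : ℝ, 0 ≤ t → HasDerivAt u
        (-(fderiv ℝ (gradient W) (u t)) (gradient W (u t))) t) →
      ⟪u 0, allOnes n⟫ = ⟪ustar, allOnes n⟫ →
      ‖u 0 - ustar‖ < δ →
      ∃ C > (0 : ℝ), ∃ lam > (0 : ℝ), ∀ t : ℝ, 0 ≤ t →
        ‖u t - ustar‖ ≤ C * Real.exp (-lam * t) := by
  classical
  set G : EuclideanSpace ℝ (Fin n) → EuclideanSpace ℝ (Fin n) := gradient W with hGdef
  set A : EuclideanSpace ℝ (Fin n) → (EuclideanSpace ℝ (Fin n) →L[ℝ] EuclideanSpace ℝ (Fin n)) :=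
    fun u => fderiv ℝ G u with hAdef
  -- smoothness facts
  have hf'diff : ContDiff ℝ 1 (fderiv ℝ W) := hW.fderiv_right (by norm_num)
  have hGc : ContDiff ℝ 1 G := (toDual ℝ _).symm.contDiff.comp hf'diff
  have hGd : Differentiable ℝ G := hGc.differentiable one_ne_zero
  have hWd : Differentiable ℝ W := hW.differentiable (by norm_num)
  have hfda : ∀ u, HasFDerivAt G (A u) u := fun u => (hGd u).hasFDerivAt
  have hAcont : Continuous A := hGc.continuous_fderiv one_ne_zero
  -- symmetry of the Hessian
  have hsym : ∀ u x y, ⟪A u x, y⟫ = ⟪x, A u y⟫ := by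
    intro u x y
    have hfd2 : HasFDerivAt (fderiv ℝ W) (fderiv ℝ (fderiv ℝ W) u) u :=
      ((hf'diff.differentiable one_ne_zero) u).hasFDerivAt
    have key : ∀ z w, ⟪A u z, w⟫ = fderiv ℝ (fderiv ℝ W) u z w := by
      intro z w
      have h1 : HasFDerivAt (fun p => ⟪w, G p⟫) ((innerSL ℝ w).comp (A u)) u :=
        (innerSL ℝ w).hasFDerivAt.comp u (hfda u)
      have h2 : HasFDerivAt (fun p => fderiv ℝ W p w)
          ((ContinuousLinearMap.apply ℝ ℝ w).comp (fderiv ℝ (fderiv ℝ W) u)) u :=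
        (ContinuousLinearMap.apply ℝ ℝ w).hasFDerivAt.comp u hfd2
      have heq : (fun p => ⟪w, G p⟫) = fun p => fderiv ℝ W p w := by
        funext p
        rw [real_inner_comm]
        exact toDual_symm_apply
      rw [heq] at h1
      have h3 := h1.unique h2
      have h4 := congrArg (fun (L : EuclideanSpace ℝ (Fin n) →L[ℝ] ℝ) => L z) h3
      simp only [ContinuousLinearMap.coe_comp', Function.comp_apply, innerSL_apply_apply,
        ContinuousLinearMap.apply_apply] at h4
      rw [real_inner_comm]
      exact h4
    have hsymW := second_derivative_symmetric (f := W)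
      (fun p => (hWd p).hasFDerivAt) hfd2 x y
    rw [key x y, hsymW, ← key y x, real_inner_comm]
  -- the Hessian kills the all-ones vector
  have hA1 : ∀ u, A u (allOnes n) = 0 := by
    intro u
    have hline : HasDerivAt (fun c : ℝ => u + c • allOnes n) (allOnes n) 0 := by
      simpa using ((hasDerivAt_id (0 : ℝ)).smul_const (allOnes n)).const_add u
    have h1 : HasDerivAt (fun c : ℝ => G (u + c • allOnes n))
        (A (u + (0 : ℝ) • allOnes n) (allOnes n)) 0 :=
      (hfda _).comp_hasDerivAt 0 hline
    have h2 : (fun c : ℝ => G (u + c • allOnes n)) = fun _ => G u := funext fun c => hinv u c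
    rw [h2] at h1
    have h0 := h1.unique (hasDerivAt_const (0 : ℝ) (G u))
    simpa using h0
  have hAone : ∀ u x, ⟪A u x, allOnes n⟫ = 0 := by
    intro u x
    rw [hsym u x (allOnes n), hA1 u, inner_zero_right]
  -- positive-definiteness constant on the hyperplane
  obtain ⟨m, hm0, hm⟩ : ∃ m > (0 : ℝ), ∀ w : EuclideanSpace ℝ (Fin n),
      ⟪w, allOnes n⟫ = 0 → m * ‖w‖ ^ 2 ≤ ⟪A ustar w, w⟫ := by
    set S : Set (EuclideanSpace ℝ (Fin n)) :=
      Metric.sphere 0 1 ∩ {w | ⟪w, allOnes n⟫ = 0} with hSdef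
    have hperp_closed : IsClosed {w : EuclideanSpace ℝ (Fin n) | ⟪w, allOnes n⟫ = 0} :=
      isClosed_eq (Continuous.inner continuous_id continuous_const) continuous_const
    have hScpt : IsCompact S := (isCompact_sphere 0 1).inter_right hperp_closed
    have hfc : Continuous fun w : EuclideanSpace ℝ (Fin n) => ⟪A ustar w, w⟫ :=
      Continuous.inner (A ustar).continuous continuous_id
    by_cases hne : S.Nonempty
    · obtain ⟨w₀, hw₀S, hw₀min⟩ := hScpt.exists_isMinOn hne hfc.continuousOn
      have hw₀norm : ‖w₀‖ = 1 := by
        have := hw₀S.1; simpa using this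
      have hw₀ne : w₀ ≠ 0 := by
        intro h; rw [h, norm_zero] at hw₀norm; norm_num at hw₀norm
      refine ⟨⟪A ustar w₀, w₀⟫, hpos w₀ hw₀ne hw₀S.2, ?_⟩
      intro w hw
      by_cases hw0 : w = 0
      · simp [hw0]
      · have hnw : (0 : ℝ) < ‖w‖ := norm_pos_iff.2 hw0
        have hmem : (‖w‖⁻¹ • w) ∈ S := by
          constructor
          · simp [norm_smul, abs_of_pos (inv_pos.2 hnw), inv_mul_cancel₀ (ne_of_gt hnw)]
          · simp only [Set.mem_setOf_eq, real_inner_smul_left, hw, mul_zero]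
        have hval : ⟪A ustar (‖w‖⁻¹ • w), (‖w‖⁻¹ • w)⟫ = ‖w‖⁻¹ * (‖w‖⁻¹ * ⟪A ustar w, w⟫) := by
          rw [map_smul, real_inner_smul_left, real_inner_smul_right]
        have hle : ⟪A ustar w₀, w₀⟫ ≤ ‖w‖⁻¹ * (‖w‖⁻¹ * ⟪A ustar w, w⟫) := by
          rw [← hval]; exact hw₀min hmem
        have h2 : ⟪A ustar w₀, w₀⟫ * ‖w‖ ^ 2 ≤ ⟪A ustar w, w⟫ := by
          have h3 := mul_le_mul_of_nonneg_right hle (sq_nonneg ‖w‖)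
          have h4 : ‖w‖⁻¹ * (‖w‖⁻¹ * ⟪A ustar w, w⟫) * ‖w‖ ^ 2 = ⟪A ustar w, w⟫ := by
            field_simp
          linarith [h3, h4.le, h4.ge]
        linarith [h2]
    · refine ⟨1, one_pos, ?_⟩
      intro w hw
      by_cases hw0 : w = 0
      · simp [hw0]
      · exfalso
        apply hne
        have hnw : (0 : ℝ) < ‖w‖ := norm_pos_iff.2 hw0
        refine ⟨‖w‖⁻¹ • w, ?_, ?_⟩
        · simp [norm_smul, abs_of_pos (inv_pos.2 hnw), inv_mul_cancel₀ (ne_of_gt hnw)]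
        · simp only [Set.mem_setOf_eq, real_inner_smul_left, hw, mul_zero]
  -- lower bound on ‖A ustar w‖ on the hyperplane
  have hAlow : ∀ w : EuclideanSpace ℝ (Fin n), ⟪w, allOnes n⟫ = 0 →
      m * ‖w‖ ≤ ‖A ustar w‖ := by
    intro w hw
    by_cases hw0 : w = 0
    · simp [hw0]
    · have hnw : (0 : ℝ) < ‖w‖ := norm_pos_iff.2 hw0
      have h1 := hm w hw
      have h2 : ⟪A ustar w, w⟫ ≤ ‖A ustar w‖ * ‖w‖ := real_inner_le_norm _ _
      nlinarith
  -- choose epsilon and the radii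
  set M : ℝ := ‖A ustar‖ + 1 with hMdef
  have hM1 : 1 ≤ M := by have := norm_nonneg (A ustar); rw [hMdef]; linarith
  have hM0 : 0 < M := lt_of_lt_of_le one_pos hM1
  obtain ⟨ε, hε0, hε1, hεm⟩ : ∃ ε : ℝ, 0 < ε ∧ ε ≤ 1 ∧ ε ≤ m ^ 2 / (4 * M) :=
    ⟨min 1 (m ^ 2 / (4 * M)), by positivity, min_le_left _ _, min_le_right _ _⟩
  have hlo := ((hfda ustar).isLittleO).def hε0
  obtain ⟨δ₁, hδ₁0, hδ₁⟩ := Metric.eventually_nhds_iff.1 hlo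
  obtain ⟨δ₂, hδ₂0, hδ₂⟩ := Metric.continuousAt_iff.1 hAcont.continuousAt ε hε0
  set δ' : ℝ := min δ₁ δ₂ / 2 with hδ'def
  have hδ'0 : 0 < δ' := by rw [hδ'def]; positivity
  have hmin0 : 0 < min δ₁ δ₂ := lt_min hδ₁0 hδ₂0
  have hδ'δ₁ : δ' < δ₁ := by
    rw [hδ'def]; have := min_le_left δ₁ δ₂; linarith
  have hδ'δ₂ : δ' < δ₂ := by
    rw [hδ'def]; have := min_le_right δ₁ δ₂; linarith
  have hεM : ε * M ≤ m ^ 2 / 4 := by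
    have h := mul_le_mul_of_nonneg_right hεm hM0.le
    have h2 : m ^ 2 / (4 * M) * M = m ^ 2 / 4 := by field_simp
    linarith
  -- the key pointwise estimate
  have hkey : ∀ u' : EuclideanSpace ℝ (Fin n), ‖u' - ustar‖ ≤ δ' →
      ⟪u' - ustar, allOnes n⟫ = 0 →
      m ^ 2 / 2 * ‖u' - ustar‖ ^ 2 ≤ ⟪A u' (G u'), u' - ustar⟫ := by
    intro u' hvle hvperp
    have hdist1 : dist u' ustar < δ₁ := by
      rw [dist_eq_norm]; exact lt_of_le_of_lt hvle hδ'δ₁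
    have hdist2 : dist u' ustar < δ₂ := by
      rw [dist_eq_norm]; exact lt_of_le_of_lt hvle hδ'δ₂
    have hr : ‖G u' - c₀ • allOnes n - A ustar (u' - ustar)‖ ≤ ε * ‖u' - ustar‖ := by
      have h := hδ₁ hdist1
      rw [hcrit] at h
      exact h
    have hAd : ‖A u' - A ustar‖ ≤ ε := by
      have := hδ₂ hdist2
      rw [dist_eq_norm] at this
      exact this.le
    have hAu'norm : ‖A u'‖ ≤ M := by
      have h := norm_sub_norm_le (A u') (A ustar)
      rw [hMdef]; linarith
    have hGu' : G u' = c₀ • allOnes n +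
        (A ustar (u' - ustar) + (G u' - c₀ • allOnes n - A ustar (u' - ustar))) := by
      abel
    have hexpand : A u' (G u') = A u' (A ustar (u' - ustar))
        + A u' (G u' - c₀ • allOnes n - A ustar (u' - ustar)) := by
      conv_lhs => rw [hGu']
      rw [map_add, map_add, map_smul, hA1 u']
      simp
    have hAsv : ‖A ustar (u' - ustar)‖ ≤ M * ‖u' - ustar‖ := by
      refine le_trans ((A ustar).le_opNorm _) ?_
      apply mul_le_mul_of_nonneg_right _ (norm_nonneg _)
      rw [hMdef]; linarith
    have e1 : m ^ 2 * ‖u' - ustar‖ ^ 2 ≤ ⟪A ustar (A ustar (u' - ustar)), u' - ustar⟫ := by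
      rw [hsym ustar (A ustar (u' - ustar)) (u' - ustar), real_inner_self_eq_norm_sq]
      have h := hAlow (u' - ustar) hvperp
      have h2 := mul_le_mul h h (mul_nonneg hm0.le (norm_nonneg _)) (norm_nonneg _)
      nlinarith [h2]
    have e2' : ‖(A u' - A ustar) (A ustar (u' - ustar))‖ ≤ ε * (M * ‖u' - ustar‖) :=
      le_trans ((A u' - A ustar).le_opNorm _) (mul_le_mul hAd hAsv (norm_nonneg _) hε0.le)
    have e2 : -(ε * M * ‖u' - ustar‖ ^ 2) ≤ ⟪(A u' - A ustar) (A ustar (u' - ustar)), u' - ustar⟫ := by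
      have h := abs_real_inner_le_norm ((A u' - A ustar) (A ustar (u' - ustar))) (u' - ustar)
      have h3 := neg_abs_le ⟪(A u' - A ustar) (A ustar (u' - ustar)), u' - ustar⟫
      nlinarith [norm_nonneg (u' - ustar), norm_nonneg ((A u' - A ustar) (A ustar (u' - ustar)))]
    have e3' : ‖A u' (G u' - c₀ • allOnes n - A ustar (u' - ustar))‖ ≤ M * (ε * ‖u' - ustar‖) := by
      refine le_trans ((A u').le_opNorm _) ?_
      exact mul_le_mul hAu'norm hr (norm_nonneg _) hM0.le
    have e3 : -(ε * M * ‖u' - ustar‖ ^ 2) ≤ ⟪A u' (G u' - c₀ • allOnes n - A ustar (u' - ustar)), u' - ustar⟫ := by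
      have h := abs_real_inner_le_norm (A u' (G u' - c₀ • allOnes n - A ustar (u' - ustar))) (u' - ustar)
      have h3 := neg_abs_le ⟪A u' (G u' - c₀ • allOnes n - A ustar (u' - ustar)), u' - ustar⟫
      nlinarith [norm_nonneg (u' - ustar), norm_nonneg (A u' (G u' - c₀ • allOnes n - A ustar (u' - ustar)))]
    have hsplit : ⟪A u' (G u'), u' - ustar⟫
        = ⟪A ustar (A ustar (u' - ustar)), u' - ustar⟫
        + ⟪(A u' - A ustar) (A ustar (u' - ustar)), u' - ustar⟫
        + ⟪A u' (G u' - c₀ • allOnes n - A ustar (u' - ustar)), u' - ustar⟫ := by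
      rw [hexpand, inner_add_left]
      have h5 : A u' (A ustar (u' - ustar)) = A ustar (A ustar (u' - ustar))
          + (A u' - A ustar) (A ustar (u' - ustar)) := by
        simp [ContinuousLinearMap.sub_apply]
      rw [h5, inner_add_left]
    have hfin : (ε * M) * ‖u' - ustar‖ ^ 2 ≤ m ^ 2 / 4 * ‖u' - ustar‖ ^ 2 :=
      mul_le_mul_of_nonneg_right hεM (sq_nonneg _)
    have hsum := add_le_add (add_le_add e1 e2) e3
    rw [← hsplit] at hsum
    clear_value M δ' G A
    linarith only [hsum, hfin]
  -- now the dynamical argument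
  refine ⟨δ', hδ'0, ?_⟩
  intro u hu' hinit hclose
  have hu : ∀ t : ℝ, 0 ≤ t → HasDerivAt u (-(A (u t)) (G (u t))) t := hu'
  set φ : ℝ → ℝ := fun t => ‖u t - ustar‖ ^ 2 with hφdef
  -- conservation of the component along allOnes
  have hgd : ∀ t : ℝ, 0 ≤ t → HasDerivAt (fun s => ⟪u s, allOnes n⟫) 0 t := by
    intro t ht
    have h := (hu t ht).inner ℝ (hasDerivAt_const t (allOnes n))
    have hval : ⟪u t, (0 : EuclideanSpace ℝ (Fin n))⟫ + ⟪-(A (u t)) (G (u t)), allOnes n⟫ = 0 := by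
      rw [inner_zero_right, inner_neg_left, hAone]
      ring
    rw [hval] at h
    exact h
  have hconst : ∀ t : ℝ, 0 ≤ t → ⟪u t, allOnes n⟫ = ⟪u 0, allOnes n⟫ := by
    intro t ht
    have hgc : ContinuousOn (fun s => ⟪u s, allOnes n⟫) (Set.Ici (0 : ℝ)) :=
      fun s hs => (hgd s hs).continuousAt.continuousWithinAt
    have hgdiff : DifferentiableOn ℝ (fun s => ⟪u s, allOnes n⟫) (interior (Set.Ici (0 : ℝ))) := by
      rw [interior_Ici]
      exact fun s hs => ((hgd s (le_of_lt hs)).differentiableAt).differentiableWithinAt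
    have hmono := monotoneOn_of_deriv_nonneg (convex_Ici 0) hgc hgdiff ?_
    have hanti := antitoneOn_of_deriv_nonpos (convex_Ici 0) hgc hgdiff ?_
    · exact le_antisymm (hanti Set.self_mem_Ici ht ht) (hmono Set.self_mem_Ici ht ht)
    · intro s hs
      rw [interior_Ici] at hs
      rw [(hgd s (le_of_lt hs)).deriv]
    · intro s hs
      rw [interior_Ici] at hs
      rw [(hgd s (le_of_lt hs)).deriv]
  have hperp : ∀ t : ℝ, 0 ≤ t → ⟪u t - ustar, allOnes n⟫ = 0 := by
    intro t ht
    rw [inner_sub_left, hconst t ht, hinit, sub_self]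
  -- derivative of φ
  have hφd : ∀ t : ℝ, 0 ≤ t →
      HasDerivAt φ (-2 * ⟪A (u t) (G (u t)), u t - ustar⟫) t := by
    intro t ht
    have hv : HasDerivAt (fun s => u s - ustar) (-(A (u t)) (G (u t))) t :=
      (hu t ht).sub_const ustar
    have h := hv.inner ℝ hv
    have heq : (fun s : ℝ => ⟪u s - ustar, u s - ustar⟫) = φ := by
      funext s
      rw [real_inner_self_eq_norm_sq]
    rw [heq] at h
    refine h.congr_deriv ?_
    rw [inner_neg_left, inner_neg_right, real_inner_comm]
    ring
  have hφnn : ∀ t : ℝ, 0 ≤ φ t := fun t => sq_nonneg _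
  have hsmall : ∀ t : ℝ, φ t < δ' ^ 2 → ‖u t - ustar‖ ≤ δ' := by
    intro t h
    by_contra hcon
    push_neg at hcon
    have : δ' ^ 2 < φ t := by
      rw [hφdef]
      simp only
      nlinarith [norm_nonneg (u t - ustar)]
    linarith
  have hd_le : ∀ t : ℝ, 0 ≤ t → ‖u t - ustar‖ ≤ δ' →
      -2 * ⟪A (u t) (G (u t)), u t - ustar⟫ ≤ -(m ^ 2) * φ t := by
    intro t ht hle
    have hk := hkey (u t) hle (hperp t ht)
    rw [hφdef]
    simp only
    nlinarith [hk]
  have hφ0 : φ 0 < δ' ^ 2 := by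
    rw [hφdef]
    simp only
    nlinarith [norm_nonneg (u 0 - ustar), hclose]
  -- the trajectory stays in the ball
  have hbound : ∀ t : ℝ, 0 ≤ t → φ t < δ' ^ 2 := by
    by_contra hcon
    push_neg at hcon
    obtain ⟨t₁, ht₁0, ht₁⟩ := hcon
    set B : Set ℝ := {t | 0 ≤ t ∧ δ' ^ 2 ≤ φ t} with hBdef
    have hBne : B.Nonempty := ⟨t₁, ht₁0, ht₁⟩
    have hBbdd : BddBelow B := ⟨0, fun t (htB : 0 ≤ t ∧ δ' ^ 2 ≤ φ t) => htB.1⟩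
    have ht₀0 : 0 ≤ sInf B := le_csInf hBne fun t (htB : 0 ≤ t ∧ δ' ^ 2 ≤ φ t) => htB.1
    have ht₀mem : δ' ^ 2 ≤ φ (sInf B) := by
      have hcl : sInf B ∈ closure B := csInf_mem_closure hBne hBbdd
      have hcont : ContinuousAt φ (sInf B) := (hφd (sInf B) ht₀0).continuousAt
      haveI hnb : (nhdsWithin (sInf B) B).NeBot := mem_closure_iff_nhdsWithin_neBot.1 hcl
      refine ge_of_tendsto (hcont.continuousWithinAt (s := B)).tendsto ?_
      filter_upwards [self_mem_nhdsWithin] with s hs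
      exact hs.2
    have hlt : ∀ s, 0 ≤ s → s < sInf B → φ s < δ' ^ 2 := by
      intro s hs0 hst
      by_contra hge
      push_neg at hge
      exact absurd (csInf_le hBbdd ⟨hs0, hge⟩) (not_le.2 hst)
    have hanti : AntitoneOn φ (Set.Icc 0 (sInf B)) := by
      apply antitoneOn_of_deriv_nonpos (convex_Icc 0 (sInf B))
      · exact fun s hs => (hφd s hs.1).continuousAt.continuousWithinAt
      · rw [interior_Icc]
        exact fun s hs => (hφd s (le_of_lt hs.1)).differentiableAt.differentiableWithinAt
      · rw [interior_Icc]
        intro s hs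
        have hs0 : 0 ≤ s := le_of_lt hs.1
        rw [(hφd s hs0).deriv]
        have h1 := hd_le s hs0 (hsmall s (hlt s hs0 hs.2))
        nlinarith [hφnn s, sq_nonneg m, h1]
    have hfin : φ (sInf B) ≤ φ 0 :=
      hanti (Set.left_mem_Icc.2 ht₀0) (Set.right_mem_Icc.2 ht₀0) ht₀0
    linarith
  -- exponential decay via the Lyapunov function ψ
  set ψ : ℝ → ℝ := fun t => φ t * Real.exp (m ^ 2 * t) with hψdef
  have hψd : ∀ t : ℝ, 0 ≤ t → HasDerivAt ψ
      ((-2 * ⟪A (u t) (G (u t)), u t - ustar⟫) * Real.exp (m ^ 2 * t)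
        + φ t * (Real.exp (m ^ 2 * t) * m ^ 2)) t := by
    intro t ht
    have h1 : HasDerivAt (fun s : ℝ => m ^ 2 * s) (m ^ 2) t := by
      simpa using (hasDerivAt_id t).const_mul (m ^ 2)
    have he : HasDerivAt (fun s : ℝ => Real.exp (m ^ 2 * s))
        (Real.exp (m ^ 2 * t) * m ^ 2) t := h1.exp
    exact (hφd t ht).mul he
  have hψanti : AntitoneOn ψ (Set.Ici (0 : ℝ)) := by
    apply antitoneOn_of_deriv_nonpos (convex_Ici 0)
    · exact fun s hs => (hψd s hs).continuousAt.continuousWithinAt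
    · rw [interior_Ici]
      exact fun s hs => (hψd s (le_of_lt hs)).differentiableAt.differentiableWithinAt
    · rw [interior_Ici]
      intro s hs
      have hs0 : 0 ≤ s := le_of_lt hs
      rw [(hψd s hs0).deriv]
      have h1 := hd_le s hs0 (hsmall s (hbound s hs0))
      have hexp : 0 < Real.exp (m ^ 2 * s) := Real.exp_pos _
      nlinarith [mul_le_mul_of_nonneg_right h1 hexp.le]
  have hψle : ∀ t : ℝ, 0 ≤ t → φ t * Real.exp (m ^ 2 * t) ≤ φ 0 := by
    intro t ht
    have h := hψanti Set.self_mem_Ici ht ht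
    rw [hψdef] at h
    simpa using h
  -- conclusion
  have hm20 : (0 : ℝ) < m ^ 2 / 2 := by positivity
  refine ⟨δ', hδ'0, m ^ 2 / 2, hm20, ?_⟩
  intro t ht
  have h2 := hψle t ht
  have h1 : ‖u t - ustar‖ ^ 2 * Real.exp (m ^ 2 * t) ≤ δ' ^ 2 := le_trans h2 hφ0.le
  have hexp2 : 0 < Real.exp (m ^ 2 / 2 * t) := Real.exp_pos _
  have hsq : (‖u t - ustar‖ * Real.exp (m ^ 2 / 2 * t)) ^ 2
      = ‖u t - ustar‖ ^ 2 * Real.exp (m ^ 2 * t) := by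
    have harg : m ^ 2 / 2 * t + m ^ 2 / 2 * t = m ^ 2 * t := by ring
    rw [mul_pow, sq (Real.exp _), ← Real.exp_add, harg]
  have h3 : (‖u t - ustar‖ * Real.exp (m ^ 2 / 2 * t)) ^ 2 ≤ δ' ^ 2 := by
    rw [hsq]; exact h1
  have h4 : ‖u t - ustar‖ * Real.exp (m ^ 2 / 2 * t) ≤ δ' := by
    have h5 := Real.sqrt_le_sqrt h3
    rwa [Real.sqrt_sq (by positivity), Real.sqrt_sq hδ'0.le] at h5
  have h6 : ‖u t - ustar‖ ≤ δ' * (Real.exp (m ^ 2 / 2 * t))⁻¹ := by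
    rw [← div_eq_mul_inv, le_div_iff₀ hexp2]
    exact h4
  have h7 : Real.exp (-(m ^ 2 / 2) * t) = (Real.exp (m ^ 2 / 2 * t))⁻¹ := by
    rw [neg_mul, Real.exp_neg]
  rw [h7]
  exact h6
end
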